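/- arXiv:1008.0780 — 4 statements merged into one kernel-verified Lean document; each statement's English description precedes it below -/
import Mathlib

section
/- Let A_1, A_2 be 2×2 upper triangular Toeplitz complex matrices with nonzero diagonal entries a_{1,1}, a_{2,1}. The pair (A_1, A_2) is hypercyclic on ℂ² (i.e., there exists x ∈ ℂ² such that {A_1^{k_1} A_2^{k_2} x : k_1, k_2 ∈ ℕ} is dense in ℂ²) if and only if the set {(k_1 a_{1,2}/a_{1,1} + k_2 a_{2,2}/a_{2,1}, a_{1,1}^{k_1} a_{2,1}^{k_2}) : k_1, k_2 ∈ ℕ} is dense in ℂ². -/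
/-!
Upper triangular Toeplitz matrices `T(a, b) = !![a, b; 0, a]` commute, and for `a ≠ 0`
`T(a, b)^k = a^k T(1, k b / a)`, so `A₁^k₁ A₂^k₂ = λ T(1, μ)` where `(μ, λ)` runs over the set on
the right-hand side. Since `x = T(x₁, x₀) (0, 1)` and `T(x₁, x₀)` commutes with the `Aᵢ`, the orbit
of `x` is the image of the orbit of `(0, 1)` under `T(x₁, x₀)`: it lies in the line `y₁ = 0` when
`x₁ = 0`, and otherwise it is dense iff the orbit of `(0, 1)` is. That orbit is the image of the
right-hand set under `(μ, λ) ↦ (λ μ, λ)`, a homeomorphism of the dense open set `{λ ≠ 0}`, which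
contains the right-hand set.
-/

open Set Matrix

theorem Dense.image_of_rightInvOn {X Y : Type*} [TopologicalSpace X] [TopologicalSpace Y]
    {s : Set X} {t : Set Y} {f : X → Y} {g : Y → X} (hs : Dense s) (ht : Dense t)
    (hf : ∀ y ∈ t, ContinuousAt f (g y)) (hfg : RightInvOn g f t) : Dense (f '' s) :=
  (ht.mono fun y hy => hfg hy ▸ mem_closure_image (hf y hy) (hs _)).of_closure

theorem dense_image_mulVec_iff {n K : Type*} [Fintype n] [DecidableEq n] [Field K]
    [TopologicalSpace K] [IsTopologicalRing K] {M : Matrix n n K} (hM : IsUnit M)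
    {s : Set (n → K)} : Dense ((M *ᵥ ·) '' s) ↔ Dense s := by
  have hdense {N : Matrix n n K} (hN : IsUnit N) {s : Set (n → K)} (hs : Dense s) :
      Dense ((N *ᵥ ·) '' s) :=
    (mulVec_surjective_iff_isUnit.2 hN).denseRange.dense_image
      (continuous_const.matrix_mulVec continuous_id) hs
  refine ⟨fun h => ?_, hdense hM⟩
  have := hdense (isUnit_nonsing_inv_iff.2 hM) h
  rwa [image_image, funext fun v => mulVec_mulVec v M⁻¹ M,
    nonsing_inv_mul _ ((isUnit_iff_isUnit_det M).1 hM), funext one_mulVec, image_id'] at this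

section JointOrbit

variable {n R : Type*} [Fintype n] [DecidableEq n] [Semiring R]

def jointOrbit (A B : Matrix n n R) (x : n → R) : Set (n → R) :=
  {y | ∃ k1 k2 : ℕ, y = (A ^ k1 * B ^ k2) *ᵥ x}

theorem jointOrbit_mulVec_of_commute {A B C : Matrix n n R} (hA : Commute C A)
    (hB : Commute C B) (x : n → R) :
    jointOrbit A B (C *ᵥ x) = (C *ᵥ ·) '' jointOrbit A B x := by
  have hC (k1 k2 : ℕ) : (A ^ k1 * B ^ k2) *ᵥ (C *ᵥ x) = C *ᵥ ((A ^ k1 * B ^ k2) *ᵥ x) := by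
    simp only [mulVec_mulVec, ((hA.pow_right k1).mul_right (hB.pow_right k2)).eq]
  ext y
  constructor
  · rintro ⟨k1, k2, rfl⟩
    exact ⟨_, ⟨k1, k2, rfl⟩, (hC k1 k2).symm⟩
  · rintro ⟨_, ⟨k1, k2, rfl⟩, rfl⟩
    exact ⟨k1, k2, (hC k1 k2).symm⟩

end JointOrbit

section UpperToeplitz

variable {R : Type*} [CommRing R]

def upperToeplitz (a b : R) : Matrix (Fin 2) (Fin 2) R := !![a, b; 0, a]

theorem upperToeplitz_mul (a b c d : R) :
    upperToeplitz a b * upperToeplitz c d = upperToeplitz (a * c) (a * d + b * c) := by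
  simp [upperToeplitz]

theorem commute_upperToeplitz (a b c d : R) :
    Commute (upperToeplitz a b) (upperToeplitz c d) := by
  rw [Commute, SemiconjBy, upperToeplitz_mul, upperToeplitz_mul]
  congr 1 <;> ring

theorem upperToeplitz_mulVec (a b : R) (v : Fin 2 → R) :
    upperToeplitz a b *ᵥ v = ![a * v 0 + b * v 1, a * v 1] := by
  ext i
  fin_cases i <;> simp [upperToeplitz, mulVec, dotProduct, Fin.sum_univ_two]

theorem upperToeplitz_mulVec_single (v : Fin 2 → R) :
    upperToeplitz (v 1) (v 0) *ᵥ ![0, 1] = v := by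
  rw [upperToeplitz_mulVec]
  ext i
  fin_cases i <;> simp

def mulFstBySnd (v : Fin 2 → R) : Fin 2 → R := ![v 1 * v 0, v 1]

end UpperToeplitz

section UpperToeplitzField

variable {K : Type*} [Field K]

theorem isUnit_upperToeplitz {a : K} (ha : a ≠ 0) (b : K) : IsUnit (upperToeplitz a b) :=
  (isUnit_iff_isUnit_det _).2 <| by simp [upperToeplitz, det_fin_two, ha]

theorem upperToeplitz_pow {a : K} (ha : a ≠ 0) (b : K) (k : ℕ) :
    upperToeplitz a b ^ k = upperToeplitz (a ^ k) (a ^ k * (k * (b / a))) := by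
  induction k with
  | zero => simp [upperToeplitz, one_fin_two]
  | succ k ih =>
    rw [pow_succ, ih, upperToeplitz_mul]
    congr 1
    · ring
    · field_simp
      push_cast
      ring

theorem upperToeplitz_pow_mul_pow {a c : K} (ha : a ≠ 0) (hc : c ≠ 0) (b d : K) (k1 k2 : ℕ) :
    upperToeplitz a b ^ k1 * upperToeplitz c d ^ k2 =
      upperToeplitz (a ^ k1 * c ^ k2) (a ^ k1 * c ^ k2 * (k1 * (b / a) + k2 * (d / c))) := by
  rw [upperToeplitz_pow ha, upperToeplitz_pow hc, upperToeplitz_mul]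
  congr 1
  ring

theorem jointOrbit_upperToeplitz_single {a c : K} (ha : a ≠ 0) (hc : c ≠ 0) (b d : K) :
    jointOrbit (upperToeplitz a b) (upperToeplitz c d) ![0, 1] =
      mulFstBySnd '' {v | ∃ k1 k2 : ℕ, v = ![k1 * (b / a) + k2 * (d / c), a ^ k1 * c ^ k2]} := by
  have horbit (k1 k2 : ℕ) : (upperToeplitz a b ^ k1 * upperToeplitz c d ^ k2) *ᵥ ![0, 1] =
      mulFstBySnd ![k1 * (b / a) + k2 * (d / c), a ^ k1 * c ^ k2] := by
    rw [upperToeplitz_pow_mul_pow ha hc, upperToeplitz_mulVec]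
    ext i
    fin_cases i <;> simp [mulFstBySnd]
  ext y
  constructor
  · rintro ⟨k1, k2, rfl⟩
    exact ⟨_, ⟨k1, k2, rfl⟩, (horbit k1 k2).symm⟩
  · rintro ⟨_, ⟨k1, k2, rfl⟩, rfl⟩
    exact ⟨k1, k2, (horbit k1 k2).symm⟩

theorem dense_jointOrbit_upperToeplitz_iff [TopologicalSpace K] [IsTopologicalRing K] [T1Space K]
    (a b c d : K) (x : Fin 2 → K) :
    Dense (jointOrbit (upperToeplitz a b) (upperToeplitz c d) x) ↔
      x 1 ≠ 0 ∧ Dense (jointOrbit (upperToeplitz a b) (upperToeplitz c d) ![0, 1]) := by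
  rw [← upperToeplitz_mulVec_single x, jointOrbit_mulVec_of_commute (commute_upperToeplitz ..)
    (commute_upperToeplitz ..), upperToeplitz_mulVec_single]
  by_cases hx : x 1 = 0
  · refine iff_of_false (fun hd => ?_) (not_and_of_not_left _ (not_not.2 hx))
    have hsub : (upperToeplitz (x 1) (x 0) *ᵥ ·) ''
        jointOrbit (upperToeplitz a b) (upperToeplitz c d) ![0, 1] ⊆ {y | y 1 = 0} := by
      rintro _ ⟨v, -, rfl⟩
      simp only [mem_ofPred_eq, upperToeplitz_mulVec, hx]
      simp
    have hclosed : IsClosed {y : Fin 2 → K | y 1 = 0} :=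
      isClosed_singleton.preimage (continuous_apply 1)
    have hall := hclosed.closure_subset_iff.2 hsub
    rw [hd.closure_eq] at hall
    simpa using hall (mem_univ ![0, 1])
  · rw [dense_image_mulVec_iff (isUnit_upperToeplitz hx _)]
    exact (and_iff_right hx).symm

end UpperToeplitzField

section MulFstBySnd

variable {𝕜 : Type*} [NontriviallyNormedField 𝕜]

theorem dense_image_mulFstBySnd_iff {s : Set (Fin 2 → 𝕜)} (hs : s ⊆ {v | v 1 ≠ 0}) :
    Dense (mulFstBySnd '' s) ↔ Dense s := by
  set divFstBySnd : (Fin 2 → 𝕜) → Fin 2 → 𝕜 := fun v => ![v 0 / v 1, v 1]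
  have hdense : Dense {v : Fin 2 → 𝕜 | v 1 ≠ 0} :=
    (dense_compl_singleton (0 : 𝕜)).preimage (isOpenMap_eval 1)
  have hdiv_mul : LeftInvOn divFstBySnd mulFstBySnd {v | v 1 ≠ 0} := by
    intro v hv
    ext i
    fin_cases i <;> simp [divFstBySnd, mulFstBySnd, mul_div_cancel_left₀ _ hv]
  have hmul_div : RightInvOn divFstBySnd mulFstBySnd {v | v 1 ≠ 0} := by
    intro v hv
    ext i
    fin_cases i <;> simp [divFstBySnd, mulFstBySnd, mul_div_cancel₀ _ hv]
  have hdiv_cont (v : Fin 2 → 𝕜) (hv : v 1 ≠ 0) : ContinuousAt divFstBySnd v :=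
    ((continuous_apply 0).continuousAt.div (continuous_apply 1).continuousAt hv).matrixVecCons
      ((continuous_apply 1).matrixVecCons continuous_const).continuousAt
  have hmul_cont : Continuous (mulFstBySnd (R := 𝕜)) := by
    unfold mulFstBySnd
    fun_prop
  refine ⟨fun h => ?_, fun h => h.image_of_rightInvOn hdense (fun _ _ => hmul_cont.continuousAt)
    hmul_div⟩
  rw [← (hdiv_mul.mono hs).image_image]
  exact h.image_of_rightInvOn hdense (fun v hv => hdiv_cont _ (by simpa [mulFstBySnd] using hv))
    hdiv_mul

end MulFstBySnd

theorem toeplitz2_hypercyclic_iff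
    (a11 a12 a21 a22 : ℂ) (h1 : a11 ≠ 0) (h2 : a21 ≠ 0) :
    (∃ x : Fin 2 → ℂ, Dense {y : Fin 2 → ℂ | ∃ k1 k2 : ℕ,
        y = ((!![a11, a12; 0, a11]) ^ k1 * (!![a21, a22; 0, a21]) ^ k2).mulVec x})
    ↔ Dense {v : Fin 2 → ℂ | ∃ k1 k2 : ℕ,
        v = ![(k1 : ℂ) * (a12 / a11) + (k2 : ℂ) * (a22 / a21),
              a11 ^ k1 * a21 ^ k2]} := by
  have hsnd : {v : Fin 2 → ℂ | ∃ k1 k2 : ℕ, v = ![(k1 : ℂ) * (a12 / a11) + (k2 : ℂ) * (a22 / a21),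
      a11 ^ k1 * a21 ^ k2]} ⊆ {v | v 1 ≠ 0} := by
    rintro _ ⟨k1, k2, rfl⟩
    simp [h1, h2]
  change (∃ x, Dense (jointOrbit (upperToeplitz a11 a12) (upperToeplitz a21 a22) x)) ↔ _
  rw [← dense_image_mulFstBySnd_iff hsnd, ← jointOrbit_upperToeplitz_single h1 h2]
  exact ⟨fun ⟨x, hx⟩ => ((dense_jointOrbit_upperToeplitz_iff _ _ _ _ x).1 hx).2,
    fun h => ⟨![0, 1], h⟩⟩
end

section
/- No pair (A_1, A_2) of 2×2 upper triangular Toeplitz complex matrices is hypercyclic on ℂ²: for all x ∈ ℂ² the set {A_1^{k_1} A_2^{k_2} x : k_1, k_2 ∈ ℕ} is not dense in ℂ². -/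
/-!
A matrix `!![a, b; 0, a]` with `a ≠ 0` acts like `a * (1 + (b / a) ε)` on the dual numbers, so for
every orbit point `y` with `y 1 ≠ 0` the slope `y 0 / y 1` equals
`x 0 / x 1 + k₁ (a₁₂ / a₁₁) + k₂ (a₂₂ / a₂₁)`. These slopes stay in a closed half-plane through
`x 0 / x 1`, since any two complex numbers lie in one, whereas the slopes of a dense subset of `ℂ²`
are dense in `ℂ`.
-/

open Matrix

section Toeplitz

variable {R : Type*} [CommRing R]

theorem toeplitz_mul_toeplitz (p q s t : R) :
    !![p, p * s; 0, p] * !![q, q * t; 0, q] = !![p * q, p * q * (s + t); 0, p * q] := by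
  rw [mul_fin_two]
  simp only [mul_zero, zero_mul, add_zero, zero_add]
  ring_nf

theorem toeplitz_pow (p s : R) (k : ℕ) :
    !![p, p * s; 0, p] ^ k = !![p ^ k, p ^ k * (k * s); 0, p ^ k] := by
  induction k with
  | zero => simp [one_fin_two]
  | succ k ih =>
    rw [pow_succ, ih, toeplitz_mul_toeplitz]
    push_cast
    ring_nf

theorem toeplitz_mulVec (p s : R) (x : Fin 2 → R) :
    !![p, p * s; 0, p] *ᵥ x = ![p * (x 0 + s * x 1), p * x 1] := by
  ext i
  fin_cases i <;> simp [mulVec, dotProduct, Fin.sum_univ_two, mul_add, mul_assoc]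

theorem toeplitz_pow_mulVec_one (a b : R) (k : ℕ) (x : Fin 2 → R) :
    (!![a, b; 0, a] ^ k *ᵥ x) 1 = a ^ k * x 1 := by
  induction k with
  | zero => simp
  | succ k ih =>
    rw [pow_succ', ← mulVec_mulVec, pow_succ', mul_assoc, ← ih]
    generalize !![a, b; 0, a] ^ k *ᵥ x = v
    simp [mulVec, dotProduct, Fin.sum_univ_two]

end Toeplitz

section Field

variable {K : Type*} [Field K]

/-- If `a = 0` then `k = 0`, so the junk value `b / 0 = 0` does no harm. -/
theorem toeplitz_pow_of_pow_ne_zero {a b : K} {k : ℕ} (h : a ^ k ≠ 0) :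
    !![a, b; 0, a] ^ k = !![a ^ k, a ^ k * (k * (b / a)); 0, a ^ k] := by
  rcases eq_or_ne k 0 with rfl | hk
  · simp [one_fin_two]
  · rw [← toeplitz_pow, mul_div_cancel₀ b (ne_zero_pow hk h)]

theorem div_of_eq_toeplitz_pow_mul_pow_mulVec {a₁ b₁ a₂ b₂ : K} {k₁ k₂ : ℕ} {x y : Fin 2 → K}
    (hy : y = (!![a₁, b₁; 0, a₁] ^ k₁ * !![a₂, b₂; 0, a₂] ^ k₂) *ᵥ x) (hy₁ : y 1 ≠ 0) :
    y 0 / y 1 = x 0 / x 1 + (k₁ * (b₁ / a₁) + k₂ * (b₂ / a₂)) := by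
  have hy₁' : y 1 = a₁ ^ k₁ * (a₂ ^ k₂ * x 1) := by
    rw [hy, ← mulVec_mulVec, toeplitz_pow_mulVec_one, toeplitz_pow_mulVec_one]
  rw [hy₁'] at hy₁
  obtain ⟨h₁, h₂, hx⟩ : a₁ ^ k₁ ≠ 0 ∧ a₂ ^ k₂ ≠ 0 ∧ x 1 ≠ 0 := by
    simpa [not_or] using hy₁
  rw [hy, toeplitz_pow_of_pow_ne_zero h₁, toeplitz_pow_of_pow_ne_zero h₂, toeplitz_mul_toeplitz,
    toeplitz_mulVec]
  simp only [cons_val_zero, cons_val_one]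
  field_simp

end Field

theorem Dense.image_div_of_ne_zero {K : Type*} [Field K] [TopologicalSpace K]
    [IsTopologicalDivisionRing K] [T1Space K] {S : Set (Fin 2 → K)} (hS : Dense S) :
    Dense ((fun y => y 0 / y 1) '' (S ∩ {y | y 1 ≠ 0})) := by
  refine dense_iff_inter_open.2 fun V hV ⟨z, hz⟩ => ?_
  have hcont : ContinuousOn (fun y : Fin 2 → K => y 0 / y 1) {y | y 1 ≠ 0} :=
    (continuous_apply 0).continuousOn.div₀ (continuous_apply 1).continuousOn fun _ hy => hy
  have hopen := hcont.isOpen_inter_preimage (isOpen_ne_fun (continuous_apply 1) continuous_const) hV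
  obtain ⟨y, hyS, hy₁, hyV⟩ := hS.exists_mem_open hopen ⟨![z, 1], by simpa using hz⟩
  exact ⟨_, hyV, y, ⟨hyS, hy₁⟩, rfl⟩

theorem Complex.exists_ne_zero_re_mul_eq_zero (b : ℂ) : ∃ w ≠ 0, (w * b).re = 0 := by
  rcases eq_or_ne b 0 with rfl | hb
  · exact ⟨1, one_ne_zero, by simp⟩
  · refine ⟨I * (starRingEnd ℂ) b, mul_ne_zero I_ne_zero (by simpa using hb), ?_⟩
    rw [mul_assoc, mul_comm (starRingEnd ℂ b), mul_conj]
    simp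

theorem Complex.exists_ne_zero_re_mul_nonneg (b₁ b₂ : ℂ) :
    ∃ w ≠ 0, 0 ≤ (w * b₁).re ∧ 0 ≤ (w * b₂).re := by
  obtain ⟨w, hw, h₁⟩ := exists_ne_zero_re_mul_eq_zero b₁
  rcases le_total 0 (w * b₂).re with h₂ | h₂
  · exact ⟨w, hw, h₁.ge, h₂⟩
  · exact ⟨-w, neg_ne_zero.2 hw, by simp [h₁], by simpa using h₂⟩

theorem Complex.not_dense_of_subset_halfPlane {w r : ℂ} {T : Set ℂ} (hw : w ≠ 0)
    (hT : T ⊆ {z | 0 ≤ (w * (z - r)).re}) : ¬ Dense T := by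
  have hclosed : IsClosed {z : ℂ | 0 ≤ (w * (z - r)).re} :=
    isClosed_le continuous_const (by fun_prop)
  intro hdense
  have hmem := hclosed.closure_subset_iff.2 hT
    (hdense.closure_eq ▸ Set.mem_univ (r - (starRingEnd ℂ) w))
  simp only [Set.mem_ofPred_eq, sub_sub_cancel_left, mul_neg, mul_conj, neg_re, ofReal_re] at hmem
  have := normSq_pos.2 hw
  linarith

theorem toeplitz2_not_hypercyclic
    (a11 a12 a21 a22 : ℂ) (x : Fin 2 → ℂ) :
    ¬ Dense {y : Fin 2 → ℂ | ∃ k1 k2 : ℕ,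
        y = ((!![a11, a12; 0, a11]) ^ k1 * (!![a21, a22; 0, a21]) ^ k2).mulVec x} := by
  intro hS
  obtain ⟨w, hw, h₁, h₂⟩ := Complex.exists_ne_zero_re_mul_nonneg (a12 / a11) (a22 / a21)
  refine Complex.not_dense_of_subset_halfPlane (r := x 0 / x 1) hw ?_ hS.image_div_of_ne_zero
  rintro _ ⟨y, ⟨⟨k1, k2, hy⟩, hy₁⟩, rfl⟩
  show 0 ≤ (w * (y 0 / y 1 - x 0 / x 1)).re
  rw [div_of_eq_toeplitz_pow_mul_pow_mulVec hy hy₁, add_sub_cancel_left, mul_add, mul_left_comm,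
    mul_left_comm w, Complex.add_re]
  simp only [Complex.mul_re, Complex.natCast_re, Complex.natCast_im, zero_mul, sub_zero]
  positivity
end

section
/- Let A_1, A_2, A_3 be 3×3 upper triangular Toeplitz complex matrices with nonzero diagonal entries a_{j,1}. The triple (A_1, A_2, A_3) is hypercyclic on ℂ³ if and only if the set {(Σ_{j=1}^3 k_j(a_{j,3}/a_{j,1} − (1/2)a_{j,2}²/a_{j,1}²), Σ_{j=1}^3 k_j a_{j,2}/a_{j,1}, a_{1,1}^{k_1} a_{2,1}^{k_2} a_{3,1}^{k_3}) : k_1, k_2, k_3 ∈ ℕ} is dense in ℂ³. -/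
/-! In the coordinates `v ↦ v 2 • exp (v 1 • N + v 0 • N ^ 2)`, with `N` the nilpotent shift, upper
triangular Toeplitz matrices with invertible diagonal multiply by adding the first two coordinates
and multiplying the last. So the orbit of `x` is the image of the set `{v_k}` of the statement
under `v ↦ toeplitzExp v *ᵥ x`. For `x = e₃ = Pi.single 2 1` this map is a homeomorphism from
`{v | v 2 ≠ 0}` onto `{y | y 2 ≠ 0}`, both open and dense. A vector with dense orbit has
`x 2 ≠ 0`, hence is `toeplitzExp u *ᵥ e₃` for an invertible `toeplitzExp u` commuting with the
whole orbit, and its orbit is a linear image of that of `e₃`. -/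

open Matrix Set

theorem OpenPartialHomeomorph.dense_image_iff {X Y : Type*} [TopologicalSpace X]
    [TopologicalSpace Y] (e : OpenPartialHomeomorph X Y) (hsource : Dense e.source)
    (htarget : Dense e.target) {s : Set X} (hs : s ⊆ e.source) :
    Dense (e '' s) ↔ Dense s := by
  have himage : e.IsImage (closure s) (closure (e '' s)) := by
    refine (OpenPartialHomeomorph.IsImage.of_image_eq ?_).closure
    rw [inter_eq_right.2 hs, inter_eq_right.2 ((image_mono hs).trans e.image_source_eq_target.le)]
  constructor
  · intro h
    refine dense_closure.1 (hsource.mono fun x hx => ?_)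
    exact (himage.apply_mem_iff hx).1 (h.closure_eq ▸ mem_univ _)
  · intro h
    refine dense_closure.1 (htarget.mono fun y hy => ?_)
    rw [← e.right_inv hy]
    exact (himage.apply_mem_iff (e.map_target hy)).2 (h.closure_eq ▸ mem_univ _)

theorem dense_setOf_apply_ne_zero {𝕜 ι : Type*} [NontriviallyNormedField 𝕜] (i : ι) :
    Dense {y : ι → 𝕜 | y i ≠ 0} :=
  (dense_compl_singleton (0 : 𝕜)).preimage (isOpenMap_eval i)

section Algebra

variable {𝕜 : Type*} [Field 𝕜]

def toeplitzExp (v : Fin 3 → 𝕜) : Matrix (Fin 3) (Fin 3) 𝕜 :=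
  !![v 2, v 2 * v 1, v 2 * (v 0 + v 1 ^ 2 / 2); 0, v 2, v 2 * v 1; 0, 0, v 2]

theorem toeplitzExp_mul [NeZero (2 : 𝕜)] (v w : Fin 3 → 𝕜) :
    toeplitzExp v * toeplitzExp w = toeplitzExp ![v 0 + w 0, v 1 + w 1, v 2 * w 2] := by
  ext i j
  fin_cases i <;> fin_cases j <;> simp [toeplitzExp, Matrix.mul_apply, Fin.sum_univ_three]
  all_goals field_simp
  all_goals ring

theorem toeplitzExp_mul_comm [NeZero (2 : 𝕜)] (v w : Fin 3 → 𝕜) :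
    toeplitzExp v * toeplitzExp w = toeplitzExp w * toeplitzExp v := by
  rw [toeplitzExp_mul, toeplitzExp_mul, add_comm (v 0), add_comm (v 1), mul_comm (v 2)]

theorem toeplitzExp_zero_zero_one : toeplitzExp ![0, 0, (1 : 𝕜)] = 1 := by
  ext i j; fin_cases i <;> fin_cases j <;> simp [toeplitzExp]

theorem toeplitzExp_inv_mul [NeZero (2 : 𝕜)] (v : Fin 3 → 𝕜) (hv : v 2 ≠ 0) :
    toeplitzExp ![-v 0, -v 1, (v 2)⁻¹] * toeplitzExp v = 1 := by
  rw [toeplitzExp_mul, ← toeplitzExp_zero_zero_one]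
  congr 1
  ext i; fin_cases i <;> simp [hv]

theorem toeplitzExp_pow [NeZero (2 : 𝕜)] (v : Fin 3 → 𝕜) (k : ℕ) :
    toeplitzExp v ^ k = toeplitzExp ![k * v 0, k * v 1, v 2 ^ k] := by
  induction k with
  | zero => simp [← toeplitzExp_zero_zero_one]
  | succ k ih =>
    rw [pow_succ, ih, toeplitzExp_mul]
    congr 1
    ext i; fin_cases i <;> simp <;> ring

theorem upperToeplitz_eq_toeplitzExp [NeZero (2 : 𝕜)] (a₀ a₁ a₂ : 𝕜) (h : a₀ ≠ 0) :
    !![a₀, a₁, a₂; 0, a₀, a₁; 0, 0, a₀] =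
      toeplitzExp ![a₂ / a₀ - (1/2) * a₁ ^ 2 / a₀ ^ 2, a₁ / a₀, a₀] := by
  ext i j
  fin_cases i <;> fin_cases j <;> simp [toeplitzExp]
  all_goals field_simp
  ring

theorem toeplitzExp_mulVec_apply_two (v x : Fin 3 → 𝕜) :
    (toeplitzExp v *ᵥ x) 2 = v 2 * x 2 := by
  simp [toeplitzExp, mulVec, dotProduct, Fin.sum_univ_three]

end Algebra

section Topology

variable {𝕜 : Type*} [NontriviallyNormedField 𝕜]

variable (𝕜) in
def toeplitzExpLastCol : OpenPartialHomeomorph (Fin 3 → 𝕜) (Fin 3 → 𝕜) where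
  toFun v := ![v 2 * (v 0 + v 1 ^ 2 / 2), v 2 * v 1, v 2]
  invFun y := ![y 0 / y 2 - (y 1 / y 2) ^ 2 / 2, y 1 / y 2, y 2]
  source := {v | v 2 ≠ 0}
  target := {y | y 2 ≠ 0}
  map_source' v hv := by simpa using hv
  map_target' y hy := by simpa using hy
  left_inv' v hv := by
    have hv : v 2 ≠ 0 := hv
    ext i; fin_cases i <;> simp
    all_goals field_simp
    ring
  right_inv' y hy := by
    have hy : y 2 ≠ 0 := hy
    ext i; fin_cases i <;> simp
    all_goals field_simp
  open_source := isOpen_ne_fun (continuous_apply 2) continuous_const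
  open_target := isOpen_ne_fun (continuous_apply 2) continuous_const
  continuousOn_toFun := by fun_prop
  continuousOn_invFun := by
    refine .matrixVecCons ?_ (.matrixVecCons ?_ (.matrixVecCons ?_ continuousOn_const)) <;>
      fun_prop (disch := intro y hy; exact hy)

theorem toeplitzExp_mulVec_single (v : Fin 3 → 𝕜) :
    toeplitzExp v *ᵥ Pi.single 2 1 = toeplitzExpLastCol 𝕜 v := by
  ext i; fin_cases i <;> simp [toeplitzExp, mulVec_single, toeplitzExpLastCol]

theorem apply_two_ne_zero_of_dense_range_toeplitzExp_mulVec {ι : Type*} {w : ι → Fin 3 → 𝕜}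
    {x : Fin 3 → 𝕜} (hdense : Dense (range fun i => toeplitzExp (w i) *ᵥ x)) : x 2 ≠ 0 := by
  intro hx₂
  have horbit : range (fun i => toeplitzExp (w i) *ᵥ x) ⊆ {y | y 2 = 0} := by
    rintro _ ⟨i, rfl⟩
    simp [toeplitzExp_mulVec_apply_two, hx₂]
  have hmem := (isClosed_eq (continuous_apply 2) continuous_const).closure_subset_iff.2 horbit
    (hdense.closure_eq ▸ mem_univ (Pi.single 2 1))
  simp at hmem

theorem exists_dense_range_toeplitzExp_mulVec_iff [NeZero (2 : 𝕜)] {ι : Type*} (w : ι → Fin 3 → 𝕜)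
    (hw : ∀ i, w i 2 ≠ 0) :
    (∃ x, Dense (range fun i => toeplitzExp (w i) *ᵥ x)) ↔ Dense (range w) := by
  have hsingle : range (fun i => toeplitzExp (w i) *ᵥ Pi.single 2 1) =
      toeplitzExpLastCol 𝕜 '' range w := by
    simp only [toeplitzExp_mulVec_single, ← range_comp, Function.comp_def]
  rw [← (toeplitzExpLastCol 𝕜).dense_image_iff (dense_setOf_apply_ne_zero 2)
    (dense_setOf_apply_ne_zero 2) (range_subset_iff.2 hw), ← hsingle]
  refine ⟨fun ⟨x, hdense⟩ => ?_, fun h => ⟨_, h⟩⟩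
  have hx₂ : x 2 ≠ 0 := apply_two_ne_zero_of_dense_range_toeplitzExp_mulVec hdense
  set u := (toeplitzExpLastCol 𝕜).symm x
  have hxu : x = toeplitzExp u *ᵥ Pi.single 2 1 := by
    rw [toeplitzExp_mulVec_single, (toeplitzExpLastCol 𝕜).right_inv hx₂]
  have hinv : toeplitzExp ![-u 0, -u 1, (u 2)⁻¹] * toeplitzExp u = 1 :=
    toeplitzExp_inv_mul u (by simpa [u, toeplitzExpLastCol] using hx₂)
  have himage : range (fun i => toeplitzExp (w i) *ᵥ Pi.single 2 1) =
      (toeplitzExp ![-u 0, -u 1, (u 2)⁻¹] *ᵥ ·) '' range (fun i => toeplitzExp (w i) *ᵥ x) := by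
    rw [← range_comp]
    congr 1
    funext i
    rw [Function.comp_apply, hxu, mulVec_mulVec, mulVec_mulVec, mul_assoc,
      toeplitzExp_mul_comm (w i), ← mul_assoc, hinv, one_mul]
  rw [himage]
  refine DenseRange.dense_image (Function.Surjective.denseRange fun y => ⟨toeplitzExp u *ᵥ y, ?_⟩)
    (continuous_const.matrix_mulVec continuous_id) hdense
  rw [mulVec_mulVec, hinv, one_mulVec]

end Topology

theorem upperToeplitz_pow_mul_pow_mul_pow {𝕜 : Type*} [Field 𝕜] [NeZero (2 : 𝕜)]
    (a : Fin 3 → Fin 3 → 𝕜) (ha : ∀ j, a j 0 ≠ 0) (k : Fin 3 → ℕ) :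
    (!![a 0 0, a 0 1, a 0 2; 0, a 0 0, a 0 1; 0, 0, a 0 0]) ^ k 0 *
      (!![a 1 0, a 1 1, a 1 2; 0, a 1 0, a 1 1; 0, 0, a 1 0]) ^ k 1 *
      (!![a 2 0, a 2 1, a 2 2; 0, a 2 0, a 2 1; 0, 0, a 2 0]) ^ k 2 =
    toeplitzExp ![∑ j : Fin 3, (k j : 𝕜) * (a j 2 / a j 0 - (1/2) * (a j 1)^2 / (a j 0)^2),
      ∑ j : Fin 3, (k j : 𝕜) * (a j 1 / a j 0), ∏ j : Fin 3, a j 0 ^ k j] := by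
  rw [upperToeplitz_eq_toeplitzExp _ _ _ (ha 0), upperToeplitz_eq_toeplitzExp _ _ _ (ha 1),
    upperToeplitz_eq_toeplitzExp _ _ _ (ha 2), toeplitzExp_pow, toeplitzExp_pow,
    toeplitzExp_pow, toeplitzExp_mul, toeplitzExp_mul]
  congr 1
  ext i; fin_cases i <;> simp [Fin.sum_univ_three, Fin.prod_univ_three]

theorem toeplitz3_hypercyclic_iff
    (a : Fin 3 → Fin 3 → ℂ) (ha : ∀ j, a j 0 ≠ 0) :
    (∃ x : Fin 3 → ℂ, Dense {y : Fin 3 → ℂ | ∃ k : Fin 3 → ℕ,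
        y = ((!![a 0 0, a 0 1, a 0 2; 0, a 0 0, a 0 1; 0, 0, a 0 0]) ^ k 0 *
             (!![a 1 0, a 1 1, a 1 2; 0, a 1 0, a 1 1; 0, 0, a 1 0]) ^ k 1 *
             (!![a 2 0, a 2 1, a 2 2; 0, a 2 0, a 2 1; 0, 0, a 2 0]) ^ k 2).mulVec x})
    ↔ Dense {v : Fin 3 → ℂ | ∃ k : Fin 3 → ℕ,
        v = ![∑ j : Fin 3, (k j : ℂ) * (a j 2 / a j 0 - (1/2) * (a j 1)^2 / (a j 0)^2),
              ∑ j : Fin 3, (k j : ℂ) * (a j 1 / a j 0),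
              ∏ j : Fin 3, a j 0 ^ k j]} := by
  simp_rw [upperToeplitz_pow_mul_pow_mul_pow a ha, @eq_comm _ _ (_ *ᵥ _), @eq_comm _ _ ![_, _, _]]
  refine exists_dense_range_toeplitzExp_mulVec_iff _ fun k => ?_
  simpa using Finset.prod_ne_zero_iff.2 fun j _ => pow_ne_zero (k j) (ha j)
end

section
/- No triple (A_1, A_2, A_3) of 3×3 upper triangular Toeplitz complex matrices is hypercyclic on ℂ³. -/
/-!
On vectors with `y 2 ≠ 0` the chart `y ↦ (y 1 / y 2, y 0 / y 2 - (y 1 / y 2) ^ 2 / 2) ∈ ℂ × ℂ`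
turns the action of an invertible upper triangular Toeplitz matrix into a translation. Hence
every point `A₁^k₁ A₂^k₂ A₃^k₃ x` either has vanishing last coordinate or has chart value in
`chart x + W`, where `W` is the real span of three translation vectors. Since `ℂ × ℂ` has real
dimension `4 > 3`, `W` is a proper closed subspace, so the orbit misses a nonempty open set.
-/

open Matrix Set

def toeplitz₃ (p q r : ℂ) : Matrix (Fin 3) (Fin 3) ℂ := !![p, q, r; 0, p, q; 0, 0, p]

noncomputable def toeplitzChart (y : Fin 3 → ℂ) : ℂ × ℂ :=
  (y 1 / y 2, y 0 / y 2 - (y 1 / y 2) ^ 2 / 2)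

/-- The coefficients of `N` and `N²` in `log (toeplitz₃ p q r / p)`, `N` the nilpotent shift. -/
noncomputable def toeplitzLog (p q r : ℂ) : ℂ × ℂ :=
  (q / p, r / p - (q / p) ^ 2 / 2)

lemma toeplitz₃_mulVec (p q r : ℂ) (y : Fin 3 → ℂ) :
    toeplitz₃ p q r *ᵥ y = ![p * y 0 + q * y 1 + r * y 2, p * y 1 + q * y 2, p * y 2] := by
  ext i
  fin_cases i <;> simp [toeplitz₃, mulVec, dotProduct, Fin.sum_univ_succ]; ring

lemma toeplitz₃_mulVec_two (p q r : ℂ) (y : Fin 3 → ℂ) :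
    (toeplitz₃ p q r *ᵥ y) 2 = p * y 2 := by
  simp [toeplitz₃_mulVec]

lemma toeplitzChart_toeplitz₃_mulVec {p : ℂ} (q r : ℂ) {y : Fin 3 → ℂ} (hp : p ≠ 0)
    (hy : y 2 ≠ 0) :
    toeplitzChart (toeplitz₃ p q r *ᵥ y) = toeplitzChart y + toeplitzLog p q r := by
  simp only [toeplitzChart, toeplitzLog, toeplitz₃_mulVec, Prod.mk_add_mk, Matrix.cons_val]
  congr 1 <;> field_simp; ring

lemma toeplitzChart_section (u : ℂ × ℂ) : toeplitzChart ![u.2 + u.1 ^ 2 / 2, u.1, 1] = u := by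
  simp [toeplitzChart]

lemma continuousOn_toeplitzChart : ContinuousOn toeplitzChart {y | y 2 ≠ 0} := by
  have hdiv : ∀ i : Fin 3, ContinuousOn (fun y : Fin 3 → ℂ => y i / y 2) {y | y 2 ≠ 0} :=
    fun i => (continuous_apply i).continuousOn.div (continuous_apply 2).continuousOn fun _ h => h
  exact (hdiv 1).prodMk ((hdiv 0).sub (((hdiv 1).pow 2).div_const 2))

lemma Matrix.mapsTo_pow_mulVec {n R : Type*} [Fintype n] [DecidableEq n] [Semiring R]
    {A : Matrix n n R} {s : Set (n → R)} (h : MapsTo (A *ᵥ ·) s s) (k : ℕ) :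
    MapsTo (A ^ k *ᵥ ·) s s := by
  induction k with
  | zero => simp only [pow_zero, one_mulVec]; exact fun _ hv => hv
  | succ k ih =>
    simp_rw [pow_succ', ← mulVec_mulVec]
    exact h.comp ih

section Invariant

variable (x : Fin 3 → ℂ) (W : Submodule ℝ (ℂ × ℂ))

def toeplitzOrbitBound : Set (Fin 3 → ℂ) :=
  {y | y 2 = 0 ∨ toeplitzChart y - toeplitzChart x ∈ W}

lemma self_mem_toeplitzOrbitBound : x ∈ toeplitzOrbitBound x W :=
  Or.inr (by simp)

lemma mapsTo_toeplitz₃_mulVec {p q r : ℂ} (hW : toeplitzLog p q r ∈ W) :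
    MapsTo (toeplitz₃ p q r *ᵥ ·) (toeplitzOrbitBound x W) (toeplitzOrbitBound x W) := by
  rintro y hy
  simp only [toeplitzOrbitBound, mem_ofPred_eq, toeplitz₃_mulVec_two, mul_eq_zero] at hy ⊢
  by_cases h : p = 0 ∨ y 2 = 0
  · exact Or.inl h
  push Not at h
  right
  rw [toeplitzChart_toeplitz₃_mulVec q r h.1 h.2, add_sub_right_comm]
  exact W.add_mem (hy.resolve_left h.2) hW

lemma isOpen_compl_toeplitzOrbitBound : IsOpen (toeplitzOrbitBound x W)ᶜ := by
  have hW : IsClosed (W : Set (ℂ × ℂ)) := W.closed_of_finiteDimensional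
  have hne : IsOpen {y : Fin 3 → ℂ | y 2 ≠ 0} :=
    isOpen_compl_singleton.preimage (continuous_apply 2)
  have hcont : ContinuousOn (toeplitzChart · - toeplitzChart x) {y | y 2 ≠ 0} :=
    continuousOn_toeplitzChart.sub continuousOn_const
  convert hcont.isOpen_inter_preimage hne hW.isOpen_compl using 1
  ext y
  simp [toeplitzOrbitBound, not_or]

lemma not_dense_toeplitzOrbitBound (hW : W ≠ ⊤) : ¬ Dense (toeplitzOrbitBound x W) := by
  obtain ⟨u, hu⟩ : ∃ u, u ∉ W := by simpa [Submodule.eq_top_iff'] using hW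
  set v := toeplitzChart x + u
  have hv : ![v.2 + v.1 ^ 2 / 2, v.1, 1] ∉ toeplitzOrbitBound x W := by
    simp only [toeplitzOrbitBound, mem_ofPred_eq, not_or]
    refine ⟨by simp, ?_⟩
    rwa [toeplitzChart_section, add_sub_cancel_left]
  intro hD
  obtain ⟨z, hz, hzc⟩ := hD.exists_mem_open (isOpen_compl_toeplitzOrbitBound x W) ⟨_, hv⟩
  exact hzc hz

end Invariant

theorem toeplitz3_not_hypercyclic
    (a : Fin 3 → Fin 3 → ℂ) (x : Fin 3 → ℂ) :
    ¬ Dense {y : Fin 3 → ℂ | ∃ k : Fin 3 → ℕ,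
        y = ((!![a 0 0, a 0 1, a 0 2; 0, a 0 0, a 0 1; 0, 0, a 0 0]) ^ k 0 *
             (!![a 1 0, a 1 1, a 1 2; 0, a 1 0, a 1 1; 0, 0, a 1 0]) ^ k 1 *
             (!![a 2 0, a 2 1, a 2 2; 0, a 2 0, a 2 1; 0, 0, a 2 0]) ^ k 2).mulVec x} := by
  set W := Submodule.span ℝ (range fun i => toeplitzLog (a i 0) (a i 1) (a i 2))
  have hW : W ≠ ⊤ := fun h => by
    simpa [Module.finrank_prod, Complex.finrank_real_complex] using finrank_le_of_span_eq_top h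
  have hgen (i : Fin 3) : MapsTo (toeplitz₃ (a i 0) (a i 1) (a i 2) *ᵥ ·)
      (toeplitzOrbitBound x W) (toeplitzOrbitBound x W) :=
    mapsTo_toeplitz₃_mulVec x W (Submodule.subset_span (mem_range_self i))
  refine fun hD => not_dense_toeplitzOrbitBound x W hW (hD.mono ?_)
  rintro _ ⟨k, rfl⟩
  rw [← mulVec_mulVec, ← mulVec_mulVec]
  exact mapsTo_pow_mulVec (hgen 0) (k 0) <| mapsTo_pow_mulVec (hgen 1) (k 1) <|
    mapsTo_pow_mulVec (hgen 2) (k 2) (self_mem_toeplitzOrbitBound x W)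
end
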